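/- Let n ≥ 4 and let W_n = C_n ∨ K₁ be the wheel on n+1 vertices. If n is even, then η(W_n) = 2; if n is odd, then η(W_n) = 3. -/

import Mathlib

/-!
A rim vertex `i` of the wheel sees `f (i - 1) + f (i + 1) + c`, where `c` is the label of the hub,
and the hub sees the total rim weight. So an additive coloring of `W_n` is an additive coloring of
the rim `C_n` together with a hub label `c` such that no rim sum `f (i - 1) + f (i + 1) + c` equals
the total rim weight.

Constant labels give all rim vertices the same sum, so `η ≥ 2`. With labels in `{1, 2}`, the
function `φ i = f (i + 1) + [f i = f (i + 1) = f (i + 2)]` taken mod 2 increases by exactly one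
along every rim edge (the coloring condition at an edge `f i = f (i + 1)` says `f (i - 1) ≠ f (i + 2)`),
so going once around the rim shows that `n` is even. Conversely the alternating labels
`1, 2, 1, 2, …` work for even `n`, and for odd `n` so do the same labels with the last two rim
vertices relabelled `1, 3`.
-/


open Classical in
/-- Sum of the labels `f` over the open neighborhood of `v` in `G`. -/
noncomputable def nbrSum {V : Type*} [Fintype V] (G : SimpleGraph V) (f : V → ℕ) (v : V) : ℕ :=
  ∑ w ∈ Finset.univ.filter (fun w => G.Adj v w), f w

open Classical in
/-- The degree of `v` in `G`. -/
noncomputable def deg {V : Type*} [Fintype V] (G : SimpleGraph V) (v : V) : ℕ :=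
  (Finset.univ.filter (fun w => G.Adj v w)).card

/-- `f : V → {1,…,k}` is an additive `k`-coloring of `G`: labels lie in `{1,…,k}` and
adjacent vertices get distinct open-neighborhood sums. -/
def IsAdditiveColoring {V : Type*} [Fintype V] (G : SimpleGraph V) (k : ℕ) (f : V → ℕ) : Prop :=
  (∀ v, 1 ≤ f v ∧ f v ≤ k) ∧ ∀ u v, G.Adj u v → nbrSum G f u ≠ nbrSum G f v

/-- The additive chromatic number `η(G)`: the least `k` admitting an additive `k`-coloring. -/
noncomputable def eta {V : Type*} [Fintype V] (G : SimpleGraph V) : ℕ :=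
  sInf {k | ∃ f : V → ℕ, IsAdditiveColoring G k f}

/-- The join `G ∨ K_q` of `G` with the complete graph on `q` vertices. -/
def joinK {α : Type*} (G : SimpleGraph α) (q : ℕ) : SimpleGraph (α ⊕ Fin q) where
  Adj x y :=
    match x, y with
    | Sum.inl u, Sum.inl v => G.Adj u v
    | Sum.inr i, Sum.inr j => i ≠ j
    | Sum.inl _, Sum.inr _ => True
    | Sum.inr _, Sum.inl _ => True
  symm := by
    constructor
    rintro (u | i) (v | j) h
    · exact G.adj_symm h
    · trivial
    · trivial
    · exact Ne.symm h
  loopless := by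
    constructor
    rintro (u | i) h
    · exact G.irrefl h
    · exact h rfl

open SimpleGraph Fin.CommRing

section general

variable {V : Type*} [Fintype V]

lemma nbrSum_eq_sum_neighborFinset (G : SimpleGraph V) [DecidableRel G.Adj] (f : V → ℕ) (v : V) :
    nbrSum G f v = ∑ w ∈ G.neighborFinset v, f w := by
  classical
  rw [nbrSum, neighborFinset_eq_filter]
  congr 1
  ext
  simp

lemma IsAdditiveColoring.mono {G : SimpleGraph V} {k l : ℕ} {f : V → ℕ}
    (hf : IsAdditiveColoring G k f) (hkl : k ≤ l) : IsAdditiveColoring G l f :=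
  ⟨fun v => ⟨(hf.1 v).1, (hf.1 v).2.trans hkl⟩, hf.2⟩

lemma eta_eq_add_one_of_isAdditiveColoring {G : SimpleGraph V} {k : ℕ} {f : V → ℕ}
    (hf : IsAdditiveColoring G (k + 1) f) (h : ∀ g, ¬IsAdditiveColoring G k g) :
    eta G = k + 1 := by
  refine le_antisymm (Nat.sInf_le ⟨f, hf⟩) (le_csInf ⟨k + 1, f, hf⟩ ?_)
  rintro l ⟨g, hg⟩
  by_contra! hl
  exact h g (hg.mono (Nat.le_of_lt_succ hl))

lemma card_add_le_sum_add_one {g : V → ℕ} (hg : ∀ v, 1 ≤ g v) (a : V) :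
    Fintype.card V + g a ≤ ∑ v, g v + 1 := by
  classical
  have hrest : (Finset.univ.erase a).card • 1 ≤ ∑ v ∈ Finset.univ.erase a, g v :=
    Finset.card_nsmul_le_sum _ _ _ fun v _ => hg v
  rw [Finset.card_erase_of_mem (Finset.mem_univ a), Finset.card_univ, smul_eq_mul, mul_one]
    at hrest
  rw [← Finset.add_sum_erase _ _ (Finset.mem_univ a)]
  have := Fintype.card_pos_iff.2 ⟨a⟩
  omega

end general

section joinK

variable {α : Type*} (G : SimpleGraph α) (q : ℕ)

@[simp] lemma joinK_adj_inl_inl {u v : α} : (joinK G q).Adj (.inl u) (.inl v) ↔ G.Adj u v := .rfl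
@[simp] lemma joinK_adj_inr_inr {i j : Fin q} : (joinK G q).Adj (.inr i) (.inr j) ↔ i ≠ j := .rfl
@[simp] lemma joinK_adj_inl_inr {u : α} {j : Fin q} : (joinK G q).Adj (.inl u) (.inr j) := trivial
@[simp] lemma joinK_adj_inr_inl {u : α} {j : Fin q} : (joinK G q).Adj (.inr j) (.inl u) := trivial

variable [Fintype α]

lemma nbrSum_joinK_inl (f : α ⊕ Fin q → ℕ) (v : α) :
    nbrSum (joinK G q) f (.inl v) = nbrSum G (f ∘ Sum.inl) v + ∑ j, f (.inr j) := by
  simp [nbrSum, Finset.sum_filter, Fintype.sum_sum_type]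
  rfl

lemma nbrSum_joinK_one_inr (f : α ⊕ Fin 1 → ℕ) (j : Fin 1) :
    nbrSum (joinK G 1) f (.inr j) = ∑ v, f (.inl v) := by
  simp [nbrSum, Finset.sum_filter, Fintype.sum_sum_type, Subsingleton.elim j 0]

variable {G} in
lemma isAdditiveColoring_joinK_one_iff {k : ℕ} {f : α ⊕ Fin 1 → ℕ} :
    IsAdditiveColoring (joinK G 1) k f ↔
      IsAdditiveColoring G k (f ∘ Sum.inl) ∧ (1 ≤ f (.inr 0) ∧ f (.inr 0) ≤ k) ∧
        ∀ v, nbrSum G (f ∘ Sum.inl) v + f (.inr 0) ≠ ∑ w, f (.inl w) := by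
  simp only [IsAdditiveColoring, Sum.forall, Fin.forall_fin_one, joinK_adj_inl_inl,
    joinK_adj_inr_inr, joinK_adj_inl_inr, joinK_adj_inr_inl, nbrSum_joinK_inl,
    nbrSum_joinK_one_inr, Fin.sum_univ_one, Function.comp_apply, ne_eq, add_left_inj,
    not_true, false_imp_iff, forall_const, forall_and, and_true,
    eq_comm (a := ∑ v, f (Sum.inl v))]
  tauto

end joinK

section cycleGraph

variable {n : ℕ}

lemma cycleGraph_adj_iff_eq_add_one {u v : Fin (n + 2)} :
    (cycleGraph (n + 2)).Adj u v ↔ u = v + 1 ∨ v = u + 1 := by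
  rw [cycleGraph_adj, sub_eq_iff_eq_add, sub_eq_iff_eq_add, add_comm 1, add_comm 1]

lemma nbrSum_cycleGraph (g : Fin (n + 3) → ℕ) (i : Fin (n + 3)) :
    nbrSum (cycleGraph (n + 3)) g i = g (i - 1) + g (i + 1) := by
  have hne : i - 1 ≠ i + 1 := by
    simp only [ne_eq, sub_eq_iff_eq_add, add_assoc i, left_eq_add]
    exact ne_of_beq_false rfl
  rw [nbrSum_eq_sum_neighborFinset, cycleGraph_neighborFinset, Finset.sum_pair hne]

lemma nbrSum_cycleGraph_add_one (g : Fin (n + 3) → ℕ) (i : Fin (n + 3)) :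
    nbrSum (cycleGraph (n + 3)) g (i + 1) = g i + g (i + 2) := by
  rw [nbrSum_cycleGraph, add_sub_cancel_right, add_assoc, one_add_one_eq_two]

lemma isAdditiveColoring_cycleGraph_iff {k : ℕ} {g : Fin (n + 3) → ℕ} :
    IsAdditiveColoring (cycleGraph (n + 3)) k g ↔
      (∀ i, 1 ≤ g i ∧ g i ≤ k) ∧ ∀ i, g i + g (i + 2) ≠ g (i + 1) + g (i + 3) := by
  have hsum (i : Fin (n + 3)) :
      nbrSum (cycleGraph (n + 3)) g (i + 1 + 1) = g (i + 1) + g (i + 3) := by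
    rw [nbrSum_cycleGraph_add_one]; ring_nf
  have hshift (v : Fin (n + 3)) : ∃ j, v = j + 1 := ⟨v - 1, (sub_add_cancel v 1).symm⟩
  refine and_congr_right fun _ => ⟨fun h i => ?_, fun h u v huv => ?_⟩
  · rw [← nbrSum_cycleGraph_add_one, ← hsum]
    exact h _ _ (cycleGraph_adj_iff_eq_add_one.2 (.inr rfl))
  · rcases cycleGraph_adj_iff_eq_add_one.1 huv with rfl | rfl
    · obtain ⟨j, rfl⟩ := hshift v
      rw [hsum, nbrSum_cycleGraph_add_one]
      exact (h j).symm
    · obtain ⟨j, rfl⟩ := hshift u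
      rw [hsum, nbrSum_cycleGraph_add_one]
      exact h j

lemma not_isAdditiveColoring_cycleGraph_one (g : Fin (n + 3) → ℕ) :
    ¬IsAdditiveColoring (cycleGraph (n + 3)) 1 g := by
  rw [isAdditiveColoring_cycleGraph_iff]
  rintro ⟨hbd, hrim⟩
  have hg : ∀ i, g i = 1 := fun i => le_antisymm (hbd i).2 (hbd i).1
  exact hrim 0 (by simp only [hg])

lemma even_of_forall_add_one (φ : Fin (n + 1) → ZMod 2) (h : ∀ i, φ (i + 1) = φ i + 1) :
    Even (n + 1) := by
  have hshift := Equiv.sum_comp (Equiv.addRight 1) φ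
  simp only [Equiv.coe_addRight, h, Finset.sum_add_distrib, add_eq_left, Finset.sum_const,
    Finset.card_univ, Fintype.card_fin, nsmul_eq_mul, mul_one] at hshift
  exact ZMod.natCast_eq_zero_iff_even.1 (by exact_mod_cast hshift)

lemma even_of_isAdditiveColoring_cycleGraph_two {g : Fin (n + 3) → ℕ}
    (hg : IsAdditiveColoring (cycleGraph (n + 3)) 2 g) : Even (n + 3) := by
  obtain ⟨hbd, hrim⟩ := isAdditiveColoring_cycleGraph_iff.1 hg
  set r : Fin (n + 3) → ZMod 2 := fun i => g i
  have hinj : ∀ i j, r i = r j → g i = g j := by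
    intro i j hij
    have := hbd i
    have := hbd j
    rw [ZMod.natCast_eq_natCast_iff'] at hij
    omega
  refine even_of_forall_add_one
    (fun i => r (i + 1) + if r i = r (i + 1) ∧ r (i + 1) = r (i + 2) then 1 else 0) fun i => ?_
  have hstep : r (i + 1) = r (i + 2) → r i ≠ r (i + 3) := fun h12 h03 =>
    hrim i (by rw [hinj _ _ h12, hinj _ _ h03]; ring)
  simp only [show i + 1 + 1 = i + 2 by ring, show i + 1 + 2 = i + 3 by ring]
  revert hstep
  generalize r i = a, r (i + 1) = b, r (i + 2) = c, r (i + 3) = d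
  revert a b c d
  decide

-- `omega` does not see through addition in `Fin (n + 3)`, so the labelings below are checked on
-- these explicit values.
lemma Fin.exists_vals_add_one (i : Fin (n + 3)) : ∃ a b c d : ℕ, a < n + 3 ∧
    b = (if a = n + 2 then 0 else a + 1) ∧ c = (if b = n + 2 then 0 else b + 1) ∧
    d = (if c = n + 2 then 0 else c + 1) ∧
    i.val = a ∧ (i + 1).val = b ∧ (i + 2).val = c ∧ (i + 3).val = d := by
  have hsucc (j : Fin (n + 3)) : (j + 1).val = if j.val = n + 2 then 0 else j.val + 1 := by
    simp [Fin.val_add_one, Fin.ext_iff]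
  exact ⟨_, _, _, _, i.isLt, hsucc i, hsucc (i + 1), hsucc (i + 1 + 1), rfl, rfl,
    by ring_nf, by ring_nf⟩

def parityLabel {N : ℕ} (i : Fin N) : ℕ := i.val % 2 + 1

def oddCycleLabel (i : Fin (n + 3)) : ℕ :=
  if i.val = n + 2 then 3 else if i.val = n + 1 then 1 else parityLabel i

lemma isAdditiveColoring_cycleGraph_parityLabel (hn : Even (n + 3)) :
    IsAdditiveColoring (cycleGraph (n + 3)) 2 parityLabel := by
  rw [isAdditiveColoring_cycleGraph_iff]
  refine ⟨fun i => by simp only [parityLabel]; omega, fun i => ?_⟩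
  obtain ⟨a, b, c, d, ha, hb, hc, hd, h0, h1, h2, h3⟩ := Fin.exists_vals_add_one i
  obtain ⟨m, hm⟩ := hn
  simp only [parityLabel, h0, h1, h2, h3]
  split_ifs at hb hc hd <;> omega

lemma isAdditiveColoring_cycleGraph_oddCycleLabel (hn : Odd (n + 3)) (hn2 : 2 ≤ n) :
    IsAdditiveColoring (cycleGraph (n + 3)) 3 oddCycleLabel := by
  rw [isAdditiveColoring_cycleGraph_iff]
  refine ⟨fun i => by simp only [oddCycleLabel, parityLabel]; split_ifs <;> omega, fun i => ?_⟩
  obtain ⟨a, b, c, d, ha, hb, hc, hd, h0, h1, h2, h3⟩ := Fin.exists_vals_add_one i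
  obtain ⟨m, hm⟩ := hn
  simp only [oddCycleLabel, parityLabel, h0, h1, h2, h3]
  split_ifs at hb hc hd ⊢ <;> omega

lemma isAdditiveColoring_wheel_of_cycleGraph {k : ℕ} {g : Fin (n + 3) → ℕ}
    (hg : IsAdditiveColoring (cycleGraph (n + 3)) k g) (hk : 1 ≤ k)
    (hhub : ∀ i, g i + g (i + 2) + 1 ≠ ∑ j, g j) :
    IsAdditiveColoring (joinK (cycleGraph (n + 3)) 1) k (Sum.elim g fun _ => 1) := by
  refine isAdditiveColoring_joinK_one_iff.2 ⟨hg, ⟨le_rfl, hk⟩, fun v => ?_⟩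
  obtain ⟨i, rfl⟩ : ∃ i, v = i + 1 := ⟨v - 1, (sub_add_cancel v 1).symm⟩
  simpa [nbrSum_cycleGraph_add_one] using hhub i

lemma isAdditiveColoring_wheel_parityLabel (hn : Even (n + 3)) :
    IsAdditiveColoring (joinK (cycleGraph (n + 3)) 1) 2 (Sum.elim parityLabel fun _ => 1) := by
  have hpair (i : Fin (n + 3)) : parityLabel i + parityLabel (i + 1) = 3 := by
    obtain ⟨a, b, -, -, ha, hb, -, -, h0, h1, -, -⟩ := Fin.exists_vals_add_one i
    obtain ⟨m, hm⟩ := hn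
    simp only [parityLabel, h0, h1]
    split_ifs at hb <;> omega
  have hsum : 2 * ∑ i : Fin (n + 3), parityLabel i = 3 * (n + 3) :=
    calc 2 * ∑ i : Fin (n + 3), parityLabel i
        = ∑ i, parityLabel i + ∑ i, parityLabel (i + 1) := by
          rw [two_mul, ← Equiv.sum_comp (Equiv.addRight 1)]; rfl
      _ = 3 * (n + 3) := by simp [← Finset.sum_add_distrib, hpair, mul_comm]
  refine isAdditiveColoring_wheel_of_cycleGraph (isAdditiveColoring_cycleGraph_parityLabel hn)
    one_le_two fun i => ?_
  obtain ⟨m, hm⟩ := hn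
  have : parityLabel i ≤ 2 := by simp only [parityLabel]; omega
  have : parityLabel (i + 2) ≤ 2 := by simp only [parityLabel]; omega
  omega

lemma isAdditiveColoring_wheel_oddCycleLabel (hn : Odd (n + 3)) (hn2 : 2 ≤ n) :
    IsAdditiveColoring (joinK (cycleGraph (n + 3)) 1) 3 (Sum.elim oddCycleLabel fun _ => 1) := by
  have hcycle := isAdditiveColoring_cycleGraph_oddCycleLabel hn hn2
  have hlast : oddCycleLabel (Fin.last (n + 2)) = 3 := by simp [oddCycleLabel]
  have hsum := card_add_le_sum_add_one (fun i => (hcycle.1 i).1) (Fin.last (n + 2))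
  rw [Fintype.card_fin, hlast] at hsum
  refine isAdditiveColoring_wheel_of_cycleGraph hcycle (by norm_num) fun i => ?_
  obtain ⟨a, b, c, -, ha, hb, hc, -, h0, -, h2, -⟩ := Fin.exists_vals_add_one i
  have hrim : oddCycleLabel i + oddCycleLabel (i + 2) ≤ 5 := by
    simp only [oddCycleLabel, parityLabel, h0, h2]
    split_ifs at hb hc ⊢ <;> omega
  omega

end cycleGraph

/-- For `n ≥ 4`, the wheel `W_n = C_n ∨ K₁` satisfies `η(W_n) = 2` if `n` is even
and `η(W_n) = 3` if `n` is odd. -/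
theorem eta_wheel (n : ℕ) (hn : 4 ≤ n) :
    (Even n → eta (joinK (SimpleGraph.cycleGraph n) 1) = 2) ∧
    (Odd n → eta (joinK (SimpleGraph.cycleGraph n) 1) = 3) := by
  obtain ⟨n, rfl⟩ : ∃ m, n = m + 3 := ⟨n - 3, by omega⟩
  refine ⟨fun heven => ?_, fun hodd => ?_⟩
  · refine eta_eq_add_one_of_isAdditiveColoring (isAdditiveColoring_wheel_parityLabel heven)
      fun f hf => ?_
    exact not_isAdditiveColoring_cycleGraph_one _ (isAdditiveColoring_joinK_one_iff.1 hf).1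
  · have hn2 : 2 ≤ n := by obtain ⟨k, hk⟩ := hodd; omega
    refine eta_eq_add_one_of_isAdditiveColoring (isAdditiveColoring_wheel_oddCycleLabel hodd hn2)
      fun f hf => ?_
    exact Nat.not_even_iff_odd.2 hodd
      (even_of_isAdditiveColoring_cycleGraph_two (isAdditiveColoring_joinK_one_iff.1 hf).1)
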